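/- Let I ⊂ ℚ[S,T] be the ideal generated by (T−1)(T²−1), (S−1)(S²−1), and (S−T)(T−1), let R₂ = ℚ[S,T]/I, and for ℓ ≥ 1 let ψ^ℓ be the unique ℚ-algebra endomorphism of R₂ with ψ^ℓ(S) = S^ℓ and ψ^ℓ(T) = T^ℓ. Let J ⊆ R₂ be the ℚ-linear span of Δ₀ := 1 − S² and Δ₁ := 2T² − 1 − S². Then the set of units L ∈ R₂ satisfying ψ^ℓ(L) = L^ℓ for all ℓ ≥ 1 is exactly the union of the four pairwise disjoint cosets 1 + J, S + J, T + J, and (1 + S − T) + J. -/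

import Mathlib

/-!
STATEMENT 16: Let `R₂ = ℚ[S,T]/⟨(T-1)(T²-1), (S-1)(S²-1), (S-T)(T-1)⟩`, with
the Adams operations `ψ^ℓ` (`ℓ ≥ 1`) determined by `ψ^ℓ(S) = S^ℓ`,
`ψ^ℓ(T) = T^ℓ`, and let `J` be the ℚ-span of `Δ₀ = 1 - S²` and
`Δ₁ = 2T² - 1 - S²`.  Then the set of units `L` with `ψ^ℓ(L) = L^ℓ` for all
`ℓ ≥ 1` is exactly the union of the four pairwise disjoint cosets `1 + J`,
`S + J`, `T + J` and `(1 + S - T) + J`.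
-/

open MvPolynomial

/-- The defining ideal of the virtual K-theory of `ℙ(1,2)`:
`⟨(T-1)(T²-1), (S-1)(S²-1), (S-T)(T-1)⟩ ⊆ ℚ[S,T]`, with `S = X 0`, `T = X 1`. -/
noncomputable def virtIdeal2 : Ideal (MvPolynomial (Fin 2) ℚ) :=
  Ideal.span
    {(X 1 - 1) * ((X 1) ^ 2 - 1),
     (X 0 - 1) * ((X 0) ^ 2 - 1),
     (X 0 - X 1) * (X 1 - 1)}

/-- `R₂ = ℚ[S,T]/⟨(T-1)(T²-1), (S-1)(S²-1), (S-T)(T-1)⟩`. -/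
abbrev VirtK2 : Type := MvPolynomial (Fin 2) ℚ ⧸ virtIdeal2

/-- The image of `S` in `R₂`. -/
noncomputable def sElt : VirtK2 := Ideal.Quotient.mk virtIdeal2 (X 0)

/-- The image of `T` in `R₂`. -/
noncomputable def tElt : VirtK2 := Ideal.Quotient.mk virtIdeal2 (X 1)

/-- The translation group `J`: the ℚ-span of `Δ₀ = 1 - S²` and
`Δ₁ = 2T² - 1 - S²` in `R₂`. -/
noncomputable def transJ2 : Submodule ℚ VirtK2 :=
  Submodule.span ℚ {1 - sElt ^ 2, 2 * tElt ^ 2 - 1 - sElt ^ 2}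

/-!
`R₂` has three points, `(S, T) = (-1, 1), (-1, -1), (1, 1)`, and `J` is the common kernel of
the three evaluations: a square-zero ideal on which `S` and `T` act as the identity. Every
evaluation composed with `ψ²` is evaluation at `(1, 1)`, so a unit `L` with `ψ²(L) = L²` takes
the value `1` at `(1, 1)` and `±1` at the other two points; the four sign patterns are those of
`1`, `S`, `T`, `1 + S - T`, which puts `L` in the corresponding coset of `J`. Conversely `ψ^ℓ`
is multiplication by `ℓ` on `J` and `(r + j)^ℓ = r^ℓ + ℓ j`, so a coset `r + J` consists of
λ-line elements once `ψ^ℓ(r) = r^ℓ`; for `r = 1 + S - T` this follows from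
`x^n = x^(n % 2) + ⌊n/2⌋ (x² - 1)`, valid whenever `(x - 1)(x² - 1) = 0`.
-/

section CommRing

variable {R : Type*} [CommRing R]

theorem pow_mul_eq_of_mul_eq {x j : R} (h : x * j = j) (n : ℕ) : x ^ n * j = j := by
  induction n with
  | zero => rw [pow_zero, one_mul]
  | succ n ih => rw [pow_succ, mul_assoc, h, ih]

theorem add_pow_eq_of_mul_eq {x j : R} (hxj : x * j = j) (hjj : j * j = 0) (n : ℕ) :
    (x + j) ^ n = x ^ n + n * j := by
  induction n with
  | zero => simp
  | succ n ih =>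
    rw [pow_succ, ih]
    push_cast
    linear_combination pow_mul_eq_of_mul_eq hxj n + (n : R) * hxj + (n : R) * hjj

theorem sq_pow_of_sub_one_mul {x : R} (hx : (x - 1) * (x ^ 2 - 1) = 0) (m : ℕ) :
    (x ^ 2) ^ m = 1 + m * (x ^ 2 - 1) := by
  have hsq : (x ^ 2 - 1) * (x ^ 2 - 1) = 0 := by linear_combination (x + 1) * hx
  simpa using add_pow_eq_of_mul_eq (one_mul (x ^ 2 - 1)) hsq m

theorem pow_eq_pow_mod_two_add {x : R} (hx : (x - 1) * (x ^ 2 - 1) = 0) (n : ℕ) :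
    x ^ n = x ^ (n % 2) + (n / 2 : ℕ) * (x ^ 2 - 1) := by
  have hxk : x * (x ^ 2 - 1) = x ^ 2 - 1 := by linear_combination hx
  calc x ^ n = (x ^ 2) ^ (n / 2) * x ^ (n % 2) := by rw [← pow_mul, ← pow_add, Nat.div_add_mod]
    _ = x ^ (n % 2) + (n / 2 : ℕ) * (x ^ 2 - 1) := by
      rw [sq_pow_of_sub_one_mul hx]
      linear_combination (n / 2 : ℕ) * pow_mul_eq_of_mul_eq hxk (n % 2)

end CommRing

theorem add_ne_add_of_sub_notMem {R M : Type*} [Ring R] [AddCommGroup M] [Module R M]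
    {N : Submodule R M} {r r' j j' : M} (h : r - r' ∉ N) (hj : j ∈ N) (hj' : j' ∈ N) :
    r + j ≠ r' + j' := fun heq =>
  h (by convert sub_mem hj' hj using 1; rw [sub_eq_sub_iff_add_eq_add, heq, add_comm])

namespace VirtK2

theorem mk_eq_zero_of_mem_generators {p : MvPolynomial (Fin 2) ℚ}
    (hp : p ∈ ({(X 1 - 1) * ((X 1) ^ 2 - 1), (X 0 - 1) * ((X 0) ^ 2 - 1),
      (X 0 - X 1) * (X 1 - 1)} : Set (MvPolynomial (Fin 2) ℚ))) :
    Ideal.Quotient.mk virtIdeal2 p = 0 :=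
  Ideal.Quotient.eq_zero_iff_mem.mpr (Ideal.subset_span hp)

theorem tElt_relation : (tElt - 1) * (tElt ^ 2 - 1) = 0 := by
  have h := mk_eq_zero_of_mem_generators (p := (X 1 - 1) * ((X 1) ^ 2 - 1)) (by simp)
  simp only [map_mul, map_sub, map_pow, map_one] at h
  exact h

theorem sElt_relation : (sElt - 1) * (sElt ^ 2 - 1) = 0 := by
  have h := mk_eq_zero_of_mem_generators (p := (X 0 - 1) * ((X 0) ^ 2 - 1)) (by simp)
  simp only [map_mul, map_sub, map_pow, map_one] at h
  exact h

theorem sElt_tElt_relation : (sElt - tElt) * (tElt - 1) = 0 := by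
  have h := mk_eq_zero_of_mem_generators (p := (X 0 - X 1) * (X 1 - 1)) (by simp)
  simp only [map_mul, map_sub, map_one] at h
  exact h

variable {A : Type*} [CommRing A] [Algebra ℚ A]

theorem aeval_eq_zero_of_mem_virtIdeal2 {s t : A} (hs : (s - 1) * (s ^ 2 - 1) = 0)
    (ht : (t - 1) * (t ^ 2 - 1) = 0) (hst : (s - t) * (t - 1) = 0) :
    ∀ p ∈ virtIdeal2, aeval ![s, t] p = 0 := by
  refine fun p hp => (Ideal.span_le (I := RingHom.ker (aeval ![s, t]))).mpr ?_ hp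
  rintro q (rfl | rfl | rfl) <;> simp [hs, ht, hst]

noncomputable def lift (s t : A) (hs : (s - 1) * (s ^ 2 - 1) = 0)
    (ht : (t - 1) * (t ^ 2 - 1) = 0) (hst : (s - t) * (t - 1) = 0) : VirtK2 →ₐ[ℚ] A :=
  Ideal.Quotient.liftₐ virtIdeal2 (aeval ![s, t]) (aeval_eq_zero_of_mem_virtIdeal2 hs ht hst)

section lift

variable (s t : A) (hs : (s - 1) * (s ^ 2 - 1) = 0) (ht : (t - 1) * (t ^ 2 - 1) = 0)
  (hst : (s - t) * (t - 1) = 0)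

@[simp]
theorem lift_sElt : lift s t hs ht hst sElt = s := by
  rw [lift, sElt, ← Ideal.Quotient.mkₐ_eq_mk ℚ, ← AlgHom.comp_apply,
    Ideal.Quotient.liftₐ_comp]
  simp

@[simp]
theorem lift_tElt : lift s t hs ht hst tElt = t := by
  rw [lift, tElt, ← Ideal.Quotient.mkₐ_eq_mk ℚ, ← AlgHom.comp_apply,
    Ideal.Quotient.liftₐ_comp]
  simp

end lift

@[ext]
theorem algHom_ext {f g : VirtK2 →ₐ[ℚ] A} (hs : f sElt = g sElt) (ht : f tElt = g tElt) :
    f = g := by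
  refine Ideal.Quotient.algHom_ext _ (MvPolynomial.algHom_ext fun i => ?_)
  fin_cases i
  exacts [hs, ht]

theorem transJ2_eq_span : transJ2 = Submodule.span ℚ {sElt ^ 2 - 1, tElt ^ 2 - 1} := by
  unfold transJ2
  apply le_antisymm <;> rw [Submodule.span_le, Set.insert_subset_iff, Set.singleton_subset_iff,
    SetLike.mem_coe, SetLike.mem_coe]
  · have hs := Submodule.mem_span_of_mem (R := ℚ) (Set.mem_insert (sElt ^ 2 - 1) {tElt ^ 2 - 1})
    have ht := Submodule.mem_span_of_mem (R := ℚ) (Set.mem_insert_of_mem (sElt ^ 2 - 1)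
      (Set.mem_singleton (tElt ^ 2 - 1)))
    refine ⟨?_, ?_⟩
    · convert neg_mem hs using 1; ring
    · convert sub_mem (add_mem ht ht) hs using 1; ring
  · have h0 := Submodule.mem_span_of_mem (R := ℚ)
      (Set.mem_insert (1 - sElt ^ 2) {2 * tElt ^ 2 - 1 - sElt ^ 2})
    have h1 := Submodule.mem_span_of_mem (R := ℚ) (Set.mem_insert_of_mem (1 - sElt ^ 2)
      (Set.mem_singleton (2 * tElt ^ 2 - 1 - sElt ^ 2)))
    refine ⟨?_, ?_⟩
    · convert neg_mem h0 using 1; ring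
    · refine (Submodule.smul_mem_iff _ (two_ne_zero (α := ℚ))).mp ?_
      convert sub_mem h1 h0 using 1
      rw [two_smul]; ring

theorem sElt_sq_sub_one_mem : sElt ^ 2 - 1 ∈ transJ2 :=
  transJ2_eq_span ▸ Submodule.subset_span (Set.mem_insert _ _)

theorem tElt_sq_sub_one_mem : tElt ^ 2 - 1 ∈ transJ2 :=
  transJ2_eq_span ▸ Submodule.subset_span (Set.mem_insert_of_mem _ rfl)

theorem eqOn_transJ2 {M : Type*} [AddCommGroup M] [Module ℚ M] {f g : VirtK2 →ₗ[ℚ] M}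
    (hs : f (sElt ^ 2 - 1) = g (sElt ^ 2 - 1)) (ht : f (tElt ^ 2 - 1) = g (tElt ^ 2 - 1))
    {j : VirtK2} (hj : j ∈ transJ2) : f j = g j := by
  rw [transJ2_eq_span] at hj
  refine LinearMap.eqOn_span' ?_ hj
  rintro x (rfl | rfl)
  exacts [hs, ht]

theorem sElt_mul_of_mem {j : VirtK2} (hj : j ∈ transJ2) : sElt * j = j :=
  eqOn_transJ2 (f := LinearMap.mulLeft ℚ sElt) (g := LinearMap.id)
    (by simp only [LinearMap.mulLeft_apply, LinearMap.id_apply]; linear_combination sElt_relation)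
    (by
      simp only [LinearMap.mulLeft_apply, LinearMap.id_apply]
      linear_combination (tElt + 1) * sElt_tElt_relation + tElt_relation)
    hj

theorem tElt_mul_of_mem {j : VirtK2} (hj : j ∈ transJ2) : tElt * j = j :=
  eqOn_transJ2 (f := LinearMap.mulLeft ℚ tElt) (g := LinearMap.id)
    (by
      simp only [LinearMap.mulLeft_apply, LinearMap.id_apply]
      linear_combination (sElt + tElt) * sElt_tElt_relation + tElt_relation)
    (by simp only [LinearMap.mulLeft_apply, LinearMap.id_apply]; linear_combination tElt_relation)
    hj

theorem one_add_sElt_sub_tElt_mul_of_mem {j : VirtK2} (hj : j ∈ transJ2) :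
    (1 + sElt - tElt) * j = j := by
  linear_combination sElt_mul_of_mem hj - tElt_mul_of_mem hj

theorem one_add_sElt_sub_tElt_sq_sub_one_mem : (1 + sElt - tElt) ^ 2 - 1 ∈ transJ2 := by
  convert sub_mem sElt_sq_sub_one_mem tElt_sq_sub_one_mem using 1
  linear_combination (-2 : VirtK2) * sElt_tElt_relation

theorem mul_eq_zero_of_mem {i j : VirtK2} (hi : i ∈ transJ2) (hj : j ∈ transJ2) : i * j = 0 :=
  eqOn_transJ2 (f := LinearMap.mulRight ℚ j) (g := 0)
    (by
      simp only [LinearMap.mulRight_apply, LinearMap.zero_apply]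
      linear_combination (sElt + 1) * sElt_mul_of_mem hj)
    (by
      simp only [LinearMap.mulRight_apply, LinearMap.zero_apply]
      linear_combination (tElt + 1) * tElt_mul_of_mem hj)
    hi

theorem isNilpotent_of_mem {j : VirtK2} (hj : j ∈ transJ2) : IsNilpotent j :=
  ⟨2, by rw [sq]; exact mul_eq_zero_of_mem hj hj⟩

theorem isUnit_add_of_mem {r j : VirtK2} (hr : r ^ 2 - 1 ∈ transJ2) (hj : j ∈ transJ2) :
    IsUnit (r + j) := by
  have hr2 : IsUnit (r ^ 2) := by
    simpa using (isNilpotent_of_mem hr).isUnit_one_add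
  exact (isNilpotent_of_mem hj).isUnit_add_left_of_commute
    ((isUnit_pow_iff two_ne_zero).mp hr2) (Commute.all _ _)

theorem map_eq_mul_of_mem (f : VirtK2 →ₐ[ℚ] VirtK2) {ℓ : ℕ} (hs : f sElt = sElt ^ ℓ)
    (ht : f tElt = tElt ^ ℓ) {j : VirtK2} (hj : j ∈ transJ2) : f j = ℓ * j :=
  eqOn_transJ2 (f := f.toLinearMap) (g := LinearMap.mulLeft ℚ (ℓ : VirtK2))
    (by
      simp only [AlgHom.toLinearMap_apply, LinearMap.mulLeft_apply, map_sub, map_pow, map_one,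
        hs]
      rw [← pow_mul, mul_comm, pow_mul, sq_pow_of_sub_one_mul sElt_relation]
      ring)
    (by
      simp only [AlgHom.toLinearMap_apply, LinearMap.mulLeft_apply, map_sub, map_pow, map_one,
        ht]
      rw [← pow_mul, mul_comm, pow_mul, sq_pow_of_sub_one_mul tElt_relation]
      ring)
    hj

theorem map_add_eq_pow_of_mem (f : VirtK2 →ₐ[ℚ] VirtK2) {ℓ : ℕ} (hs : f sElt = sElt ^ ℓ)
    (ht : f tElt = tElt ^ ℓ) {r j : VirtK2} (hr : ∀ i ∈ transJ2, r * i = i)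
    (hfr : f r = r ^ ℓ) (hj : j ∈ transJ2) : f (r + j) = (r + j) ^ ℓ := by
  rw [map_add, hfr, map_eq_mul_of_mem f hs ht hj,
    add_pow_eq_of_mul_eq (hr j hj) (mul_eq_zero_of_mem hj hj)]

theorem one_add_sElt_sub_tElt_pow (n : ℕ) :
    (1 + sElt - tElt) ^ n = 1 + sElt ^ n - tElt ^ n := by
  have hw : (1 + sElt - tElt - 1) * ((1 + sElt - tElt) ^ 2 - 1) = 0 := by
    linear_combination sElt_mul_of_mem one_add_sElt_sub_tElt_sq_sub_one_mem -
      tElt_mul_of_mem one_add_sElt_sub_tElt_sq_sub_one_mem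
  rw [pow_eq_pow_mod_two_add hw, pow_eq_pow_mod_two_add sElt_relation,
    pow_eq_pow_mod_two_add tElt_relation]
  rcases Nat.mod_two_eq_zero_or_one n with h | h <;> rw [h] <;>
    linear_combination (-2 * (n / 2 : ℕ) : VirtK2) * sElt_tElt_relation

-- The three points of `Spec R₂`, named by the signs of `(S, T)`.
noncomputable def evalMP : VirtK2 →ₐ[ℚ] ℚ :=
  lift (-1) 1 (by norm_num) (by norm_num) (by norm_num)

noncomputable def evalMM : VirtK2 →ₐ[ℚ] ℚ :=
  lift (-1) (-1) (by norm_num) (by norm_num) (by norm_num)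

noncomputable def evalPP : VirtK2 →ₐ[ℚ] ℚ :=
  lift 1 1 (by norm_num) (by norm_num) (by norm_num)

@[simp] theorem evalMP_sElt : evalMP sElt = -1 := lift_sElt ..
@[simp] theorem evalMP_tElt : evalMP tElt = 1 := lift_tElt ..
@[simp] theorem evalMM_sElt : evalMM sElt = -1 := lift_sElt ..
@[simp] theorem evalMM_tElt : evalMM tElt = -1 := lift_tElt ..
@[simp] theorem evalPP_sElt : evalPP sElt = 1 := lift_sElt ..
@[simp] theorem evalPP_tElt : evalPP tElt = 1 := lift_tElt ..

theorem map_eq_zero_of_mem (g : VirtK2 →ₐ[ℚ] A) (hs : g sElt ^ 2 = 1) (ht : g tElt ^ 2 = 1)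
    {j : VirtK2} (hj : j ∈ transJ2) : g j = 0 :=
  eqOn_transJ2 (f := g.toLinearMap) (g := 0) (by simp [hs]) (by simp [ht]) hj

theorem span_sup_transJ2_eq_top : Submodule.span ℚ {1, sElt, tElt} ⊔ transJ2 = ⊤ := by
  set M := Submodule.span ℚ {1, sElt, tElt} ⊔ transJ2
  have hbase : ∀ x ∈ ({1, sElt, tElt} : Set VirtK2), x ∈ M :=
    fun x hx => Submodule.mem_sup_left (Submodule.subset_span hx)
  have h1 := hbase 1 (by simp)
  have hS := hbase sElt (by simp)
  have hT := hbase tElt (by simp)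
  have hSS : sElt * sElt ∈ M := by
    convert add_mem h1 (Submodule.mem_sup_right sElt_sq_sub_one_mem) using 1; ring
  have hST : sElt * tElt ∈ M := by
    convert add_mem (sub_mem (add_mem h1 hS) hT) (Submodule.mem_sup_right tElt_sq_sub_one_mem)
      using 1
    linear_combination sElt_tElt_relation
  have hTT : tElt * tElt ∈ M := by
    convert add_mem h1 (Submodule.mem_sup_right tElt_sq_sub_one_mem) using 1; ring
  have hmul : ∀ r ∈ ({sElt, tElt} : Set VirtK2), ∀ m ∈ M, m * r ∈ M := by
    intro r hr m hm
    refine (sup_le (Submodule.span_le.mpr ?_) fun j hj => ?_ :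
      M ≤ M.comap (LinearMap.mulRight ℚ r)) hm
    · rcases hr with rfl | rfl <;> rintro x (rfl | rfl | rfl) <;>
        simp only [SetLike.mem_coe, Submodule.mem_comap, LinearMap.mulRight_apply, one_mul]
      all_goals first | assumption | rwa [mul_comm]
    · rcases hr with rfl | rfl <;>
        simp only [Submodule.mem_comap, LinearMap.mulRight_apply, mul_comm j,
          sElt_mul_of_mem hj, tElt_mul_of_mem hj] <;>
        exact Submodule.mem_sup_right hj
  refine Submodule.eq_top_iff'.mpr fun x => ?_
  obtain ⟨p, rfl⟩ := Ideal.Quotient.mk_surjective x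
  induction p using MvPolynomial.induction_on with
  | C a =>
    rw [← MvPolynomial.algebraMap_eq, Ideal.Quotient.mk_algebraMap,
      Algebra.algebraMap_eq_smul_one]
    exact M.smul_mem a h1
  | add p q hp hq => rw [map_add]; exact add_mem hp hq
  | mul_X p i hp => rw [map_mul]; exact hmul _ (by fin_cases i <;> simp [sElt, tElt]) _ hp

theorem mem_transJ2_iff {x : VirtK2} :
    x ∈ transJ2 ↔ evalMP x = 0 ∧ evalMM x = 0 ∧ evalPP x = 0 := by
  refine ⟨fun hx => ⟨map_eq_zero_of_mem _ (by simp) (by simp) hx,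
    map_eq_zero_of_mem _ (by simp) (by simp) hx, map_eq_zero_of_mem _ (by simp) (by simp) hx⟩,
    fun h => ?_⟩
  obtain ⟨y, hy, j, hj, rfl⟩ :=
    Submodule.mem_sup.mp (span_sup_transJ2_eq_top ▸ Submodule.mem_top : x ∈ _)
  obtain ⟨a, b, c, rfl⟩ := Submodule.mem_span_triple.mp hy
  obtain ⟨h1, h2, h3⟩ := h
  simp only [map_add, map_smul, map_one, smul_eq_mul, mul_one, mul_neg, even_two, Even.neg_pow,
    one_pow, evalMP_sElt, evalMP_tElt, evalMM_sElt, evalMM_tElt, evalPP_sElt, evalPP_tElt,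
    map_eq_zero_of_mem _ _ _ hj, add_zero] at h1 h2 h3
  obtain rfl : a = 0 := by linarith
  obtain rfl : b = 0 := by linarith
  obtain rfl : c = 0 := by linarith
  simpa using hj

theorem comp_eq_evalPP (g : VirtK2 →ₐ[ℚ] ℚ) (hs : g sElt ^ 2 = 1) (ht : g tElt ^ 2 = 1)
    (f : VirtK2 →ₐ[ℚ] VirtK2) (hfs : f sElt = sElt ^ 2) (hft : f tElt = tElt ^ 2) :
    g.comp f = evalPP :=
  algHom_ext (by simp [hfs, hs]) (by simp [hft, ht])

theorem sub_mem_of_isUnit_of_map_eq_sq (f : VirtK2 →ₐ[ℚ] VirtK2) (hfs : f sElt = sElt ^ 2)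
    (hft : f tElt = tElt ^ 2) {L : VirtK2} (hu : IsUnit L) (hL : f L = L ^ 2) :
    L - 1 ∈ transJ2 ∨ L - sElt ∈ transJ2 ∨ L - tElt ∈ transJ2 ∨
      L - (1 + sElt - tElt) ∈ transJ2 := by
  have hsq (g : VirtK2 →ₐ[ℚ] ℚ) (hs : g sElt ^ 2 = 1) (ht : g tElt ^ 2 = 1) :
      g L ^ 2 = evalPP L := by
    rw [← map_pow, ← hL, ← AlgHom.comp_apply, comp_eq_evalPP g hs ht f hfs hft]
  have hPP : evalPP L = 1 := by
    have h := hsq evalPP (by simp) (by simp)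
    have hne : evalPP L ≠ 0 := (hu.map evalPP).ne_zero
    rw [sq] at h
    exact (mul_eq_left₀ hne).mp h
  have hMP := sq_eq_one_iff.mp ((hsq evalMP (by simp) (by simp)).trans hPP)
  have hMM := sq_eq_one_iff.mp ((hsq evalMM (by simp) (by simp)).trans hPP)
  rcases hMP with hMP | hMP <;> rcases hMM with hMM | hMM <;>
    simp [mem_transJ2_iff, hMP, hMM, hPP]

theorem isUnit_add_and_map_add_of_mem (ψ : ℕ → (VirtK2 →ₐ[ℚ] VirtK2))
    (hψ : ∀ ℓ : ℕ, 1 ≤ ℓ → ψ ℓ sElt = sElt ^ ℓ ∧ ψ ℓ tElt = tElt ^ ℓ)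
    {r j : VirtK2} (hr2 : r ^ 2 - 1 ∈ transJ2) (hr : ∀ i ∈ transJ2, r * i = i)
    (hψr : ∀ ℓ : ℕ, 1 ≤ ℓ → ψ ℓ r = r ^ ℓ) (hj : j ∈ transJ2) :
    IsUnit (r + j) ∧ ∀ ℓ : ℕ, 1 ≤ ℓ → ψ ℓ (r + j) = (r + j) ^ ℓ :=
  ⟨isUnit_add_of_mem hr2 hj, fun ℓ hℓ =>
    map_add_eq_pow_of_mem (ψ ℓ) (hψ ℓ hℓ).1 (hψ ℓ hℓ).2 hr (hψr ℓ hℓ) hj⟩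

end VirtK2

open VirtK2 in
theorem virtual_Ktheory_P12_line_elements
    (ψ : ℕ → (VirtK2 →ₐ[ℚ] VirtK2))
    (hψ : ∀ ℓ : ℕ, 1 ≤ ℓ → ψ ℓ sElt = sElt ^ ℓ ∧ ψ ℓ tElt = tElt ^ ℓ) :
    ({L : VirtK2 | IsUnit L ∧ ∀ ℓ : ℕ, 1 ≤ ℓ → ψ ℓ L = L ^ ℓ}
      = {x | ∃ j ∈ transJ2, x = 1 + j} ∪ {x | ∃ j ∈ transJ2, x = sElt + j}
        ∪ {x | ∃ j ∈ transJ2, x = tElt + j}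
        ∪ {x | ∃ j ∈ transJ2, x = 1 + sElt - tElt + j}) ∧
    -- the four cosets are pairwise disjoint
    (∀ j ∈ transJ2, ∀ j' ∈ transJ2, (1 : VirtK2) + j ≠ sElt + j') ∧
    (∀ j ∈ transJ2, ∀ j' ∈ transJ2, (1 : VirtK2) + j ≠ tElt + j') ∧
    (∀ j ∈ transJ2, ∀ j' ∈ transJ2, (1 : VirtK2) + j ≠ 1 + sElt - tElt + j') ∧
    (∀ j ∈ transJ2, ∀ j' ∈ transJ2, sElt + j ≠ tElt + j') ∧
    (∀ j ∈ transJ2, ∀ j' ∈ transJ2, sElt + j ≠ 1 + sElt - tElt + j') ∧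
    (∀ j ∈ transJ2, ∀ j' ∈ transJ2, tElt + j ≠ 1 + sElt - tElt + j') := by
  refine ⟨Set.ext fun L => ⟨fun ⟨hu, hL⟩ => ?_, ?_⟩, ?_, ?_, ?_, ?_, ?_, ?_⟩
  · have h2 := hψ 2 one_le_two
    rcases sub_mem_of_isUnit_of_map_eq_sq (ψ 2) h2.1 h2.2 hu (hL 2 one_le_two) with
      h | h | h | h
    exacts [.inl (.inl (.inl ⟨_, h, (add_sub_cancel _ _).symm⟩)),
      .inl (.inl (.inr ⟨_, h, (add_sub_cancel _ _).symm⟩)),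
      .inl (.inr ⟨_, h, (add_sub_cancel _ _).symm⟩), .inr ⟨_, h, (add_sub_cancel _ _).symm⟩]
  · rintro (((⟨j, hj, rfl⟩ | ⟨j, hj, rfl⟩) | ⟨j, hj, rfl⟩) | ⟨j, hj, rfl⟩)
    · exact isUnit_add_and_map_add_of_mem ψ hψ (by simp) (fun i _ => one_mul i)
        (fun ℓ _ => by rw [map_one, one_pow]) hj
    · exact isUnit_add_and_map_add_of_mem ψ hψ sElt_sq_sub_one_mem (fun _ => sElt_mul_of_mem)
        (fun ℓ hℓ => (hψ ℓ hℓ).1) hj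
    · exact isUnit_add_and_map_add_of_mem ψ hψ tElt_sq_sub_one_mem (fun _ => tElt_mul_of_mem)
        (fun ℓ hℓ => (hψ ℓ hℓ).2) hj
    · refine isUnit_add_and_map_add_of_mem ψ hψ one_add_sElt_sub_tElt_sq_sub_one_mem
        (fun _ => one_add_sElt_sub_tElt_mul_of_mem) (fun ℓ hℓ => ?_) hj
      rw [map_sub, map_add, map_one, (hψ ℓ hℓ).1, (hψ ℓ hℓ).2, one_add_sElt_sub_tElt_pow]
  all_goals exact fun j hj j' hj' =>
    add_ne_add_of_sub_notMem (by norm_num [mem_transJ2_iff]) hj hj'
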